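/- arXiv:2308.11163 — 3 statements merged into one kernel-verified Lean document; each statement's English description precedes it below -/
import Mathlib

section
/- Let X be a compact metric space and f : X → X continuous. For every chain component C of f, the basin W^s(C) = { x ∈ X : lim_{i→∞} d(f^i(x), C) = 0 } is a G_δ subset of X. Moreover, x ∈ W^s(C) if and only if liminf_{i→∞} d(f^i(x), C) = 0. -/
open Filter Topology Metric Set

variable {X : Type*} [MetricSpace X]

/-- There is a `δ`-chain of `f` from `x` to `y`. -/
def ChainReach (f : X → X) (δ : ℝ) (x y : X) : Prop :=
  ∃ k : ℕ, 0 < k ∧ ∃ c : ℕ → X, c 0 = x ∧ c k = y ∧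
    ∀ i < k, dist (f (c i)) (c (i + 1)) ≤ δ

/-- `x → y` : for every `δ > 0` there is a `δ`-chain from `x` to `y`. -/
def ChainTo (f : X → X) (x y : X) : Prop := ∀ δ > 0, ChainReach f δ x y

/-- The chain recurrent set. -/
def CR (f : X → X) : Set X := {x | ChainTo f x x}

/-- The relation `x ↔ y`. -/
def ChainRel (f : X → X) (x y : X) : Prop := ChainTo f x y ∧ ChainTo f y x

/-- A chain component: an equivalence class of `↔` on `CR f`. -/
def IsChainComponent (f : X → X) (C : Set X) : Prop :=
  ∃ x ∈ CR f, C = {y | y ∈ CR f ∧ ChainRel f x y}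

/-- A `δ`-chain of `f` from `x` to `y` of length `k`, all of whose points lie in `S`. -/
def ChainInLen (f : X → X) (S : Set X) (δ : ℝ) (x y : X) (k : ℕ) : Prop :=
  0 < k ∧ ∃ c : ℕ → X, (∀ i ≤ k, c i ∈ S) ∧ c 0 = x ∧ c k = y ∧
    ∀ i < k, dist (f (c i)) (c (i + 1)) ≤ δ

/-- There is a `δ`-chain from `x` to `y` inside `S`. -/
def ChainInReach (f : X → X) (S : Set X) (δ : ℝ) (x y : X) : Prop :=
  ∃ k, ChainInLen f S δ x y k

/-- `f` restricted to `S` is chain transitive. -/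
def ChainTransitiveOn (f : X → X) (S : Set X) : Prop :=
  ∀ x ∈ S, ∀ y ∈ S, ∀ δ > 0, ChainInReach f S δ x y

/-- The basin of attraction of a set. -/
def basin (f : X → X) (C : Set X) : Set X :=
  {x | Tendsto (fun i => infDist (f^[i] x) C) atTop (𝓝 0)}

section Aux

variable {f : X → X}

/-- Sequential omega-limit set. -/
def omegaSeq (f : X → X) (x : X) : Set X :=
  {y | ∃ φ : ℕ → ℕ, StrictMono φ ∧ Tendsto (fun n => f^[φ n] x) atTop (𝓝 y)}

lemma omegaSeq_visits {x y : X} (hy : y ∈ omegaSeq f x) :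
    ∀ ε > 0, ∀ N : ℕ, ∃ i ≥ N, dist (f^[i] x) y < ε := by
  rintro ε hε N
  obtain ⟨φ, hφ, ht⟩ := hy
  obtain ⟨M, hM⟩ := Metric.tendsto_atTop.1 ht ε hε
  exact ⟨φ (max M N), le_trans (le_max_right M N) hφ.le_apply, hM _ (le_max_left M N)⟩

lemma chainReach_mono {δ δ' : ℝ} {a b : X} (h : ChainReach f δ a b) (hδ : δ ≤ δ') :
    ChainReach f δ' a b := by
  obtain ⟨k, hk, u, h0, hk', hl⟩ := h
  exact ⟨k, hk, u, h0, hk', fun i hi => le_trans (hl i hi) hδ⟩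

lemma chainReach_trans {δ : ℝ} {a b c : X} (h1 : ChainReach f δ a b)
    (h2 : ChainReach f δ b c) : ChainReach f δ a c := by
  obtain ⟨k, hk, u, hu0, huk, hul⟩ := h1
  obtain ⟨m, hm, v, hv0, hvm, hvl⟩ := h2
  refine ⟨k + m, by omega, fun i => if i < k then u i else v (i - k), ?_, ?_, ?_⟩
  · beta_reduce
    rw [if_pos hk, hu0]
  · beta_reduce
    rw [if_neg (by omega)]
    rw [show k + m - k = m from by omega, hvm]
  · intro i hi
    beta_reduce
    by_cases h : i < k
    · rcases Nat.lt_or_ge (i + 1) k with h' | h'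
      · rw [if_pos h, if_pos h']
        exact hul i h
      · have hik : i + 1 = k := by omega
        rw [if_pos h, if_neg (by omega), show i + 1 - k = 0 from by omega, hv0, ← huk, ← hik]
        exact hul i h
    · rw [if_neg h, if_neg (by omega), show i + 1 - k = (i - k) + 1 from by omega]
      exact hvl (i - k) (by omega)

lemma chainTo_trans {a b c : X} (h1 : ChainTo f a b) (h2 : ChainTo f b c) :
    ChainTo f a c :=
  fun δ hδ => chainReach_trans (h1 δ hδ) (h2 δ hδ)

lemma chainReach_right {δ ε : ℝ} {a b b' : X} (h : ChainReach f δ a b)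
    (hb : dist b b' ≤ ε) : ChainReach f (δ + ε) a b' := by
  obtain ⟨k, hk, u, h0, hk', hl⟩ := h
  have hε : 0 ≤ ε := le_trans dist_nonneg hb
  refine ⟨k, hk, fun i => if i = k then b' else u i, ?_, by beta_reduce; rw [if_pos rfl], ?_⟩
  · beta_reduce
    rw [if_neg (by omega), h0]
  · intro i hi
    beta_reduce
    rw [if_neg (by omega)]
    by_cases h' : i + 1 = k
    · rw [if_pos h']
      calc dist (f (u i)) b' ≤ dist (f (u i)) b + dist b b' := dist_triangle _ _ _
        _ ≤ δ + ε := add_le_add (by rw [← hk', ← h']; exact hl i hi) hb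
    · rw [if_neg h']
      exact le_trans (hl i hi) (by linarith)

lemma chainReach_left {δ ε : ℝ} {a b b' : X} (h : ChainReach f δ b a)
    (hb : dist (f b') (f b) ≤ ε) : ChainReach f (δ + ε) b' a := by
  obtain ⟨k, hk, u, h0, hk', hl⟩ := h
  have hε : 0 ≤ ε := le_trans dist_nonneg hb
  refine ⟨k, hk, fun i => if i = 0 then b' else u i, by beta_reduce; rw [if_pos rfl], ?_, ?_⟩
  · beta_reduce
    rw [if_neg (by omega), hk']
  · intro i hi
    beta_reduce
    by_cases h' : i = 0
    · rw [if_pos h', if_neg (by omega), h']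
      calc dist (f b') (u 1) ≤ dist (f b') (f b) + dist (f b) (u 1) := dist_triangle _ _ _
        _ ≤ ε + δ := add_le_add hb (by rw [← h0]; exact hl 0 (by omega))
        _ = δ + ε := by ring
    · rw [if_neg h', if_neg (by omega)]
      exact le_trans (hl i hi) (by linarith)

lemma chainTo_tendsto_right {a p : X} {y : ℕ → X} (hy : Tendsto y atTop (𝓝 p))
    (h : ∀ n, ChainTo f a (y n)) : ChainTo f a p := by
  intro δ hδ
  obtain ⟨N, hN⟩ := Metric.tendsto_atTop.1 hy (δ / 2) (by linarith)
  have := chainReach_right (h N (δ / 2) (by linarith)) (hN N le_rfl).le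
  exact chainReach_mono this (by linarith)

lemma chainTo_tendsto_left (hf : Continuous f) {a p : X} {y : ℕ → X}
    (hy : Tendsto y atTop (𝓝 p)) (h : ∀ n, ChainTo f (y n) a) : ChainTo f p a := by
  intro δ hδ
  have hfy : Tendsto (fun n => f (y n)) atTop (𝓝 (f p)) := (hf.tendsto p).comp hy
  obtain ⟨N, hN⟩ := Metric.tendsto_atTop.1 hfy (δ / 2) (by linarith)
  have hd : dist (f p) (f (y N)) ≤ δ / 2 := by
    rw [dist_comm]; exact (hN N le_rfl).le
  have := chainReach_left (h N (δ / 2) (by linarith)) hd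
  exact chainReach_mono this (by linarith)

lemma omegaSeq_chainTo [CompactSpace X] (hf : Continuous f) {x y z : X}
    (hy : y ∈ omegaSeq f x) (hz : z ∈ omegaSeq f x) : ChainTo f y z := by
  intro δ hδ
  obtain ⟨η, hη, hmod⟩ := Metric.uniformContinuous_iff.1
    (CompactSpace.uniformContinuous_of_continuous hf) (δ / 2) (by linarith)
  obtain ⟨i, -, hi⟩ := omegaSeq_visits hy η hη 0
  obtain ⟨j, hj, hjz⟩ := omegaSeq_visits hz (δ / 2) (by linarith) (i + 1)
  have hdy : dist (f (f^[i] x)) (f y) < δ / 2 := hmod hi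
  refine ⟨j - i, by omega,
    fun m => if m = 0 then y else if m = j - i then z else f^[i + m] x,
    by beta_reduce; rw [if_pos rfl], ?_, ?_⟩
  · beta_reduce
    rw [if_neg (by omega), if_pos rfl]
  · intro m hm
    beta_reduce
    by_cases h0 : m = 0
    · rw [if_pos h0]
      by_cases h1 : m + 1 = j - i
      · rw [if_neg (by omega), if_pos h1]
        have hji : j = i + 1 := by omega
        calc dist (f y) z ≤ dist (f y) (f (f^[i] x)) + dist (f (f^[i] x)) z :=
              dist_triangle _ _ _
          _ ≤ δ / 2 + δ / 2 := by
              refine add_le_add (by rw [dist_comm]; exact hdy.le) ?_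
              have he : f (f^[i] x) = f^[j] x := by
                rw [hji, Function.iterate_succ_apply']
              rw [he]
              exact hjz.le
          _ = δ := by ring
      · rw [if_neg (by omega), if_neg h1, h0]
        rw [show i + (0 + 1) = i + 1 from by omega, Function.iterate_succ_apply' f i x]
        rw [dist_comm]
        exact le_trans hdy.le (by linarith)
    · rw [if_neg h0, if_neg (by omega)]
      by_cases h1 : m + 1 = j - i
      · rw [if_neg (by omega), if_pos h1]
        have he : f (f^[i + m] x) = f^[j] x := by
          rw [show j = (i + m) + 1 from by omega, Function.iterate_succ_apply']
        rw [he]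
        exact le_trans hjz.le (by linarith)
      · rw [if_neg (by omega), if_neg h1,
          show i + (m + 1) = (i + m) + 1 from by omega,
          Function.iterate_succ_apply' f (i + m) x, dist_self]
        linarith

lemma mem_omegaSeq_comp {x p : X} {φ ψ : ℕ → ℕ} (hφ : StrictMono φ) (hψ : StrictMono ψ)
    (hp : Tendsto ((fun n => f^[φ n] x) ∘ ψ) atTop (𝓝 p)) : p ∈ omegaSeq f x :=
  ⟨φ ∘ ψ, hφ.comp hψ, hp⟩

lemma tendsto_infDist_of_omega_subset [CompactSpace X] {x : X} {C : Set X}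
    (hC : omegaSeq f x ⊆ C) :
    Tendsto (fun i => infDist (f^[i] x) C) atTop (𝓝 0) := by
  rw [Metric.tendsto_atTop]
  by_contra hcon
  push_neg at hcon
  obtain ⟨ε, hε, hfreq⟩ := hcon
  have hfreq' : ∃ᶠ n in atTop, ε ≤ infDist (f^[n] x) C := by
    rw [frequently_atTop]
    intro N
    obtain ⟨n, hn, h⟩ := hfreq N
    refine ⟨n, hn, ?_⟩
    rw [Real.dist_eq, sub_zero, abs_of_nonneg infDist_nonneg] at h
    exact h
  obtain ⟨φ, hφ, hφε⟩ := Filter.extraction_of_frequently_atTop hfreq'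
  obtain ⟨p, -, ψ, hψ, hp⟩ := isCompact_univ.tendsto_subseq
    (fun n => mem_univ (f^[φ n] x))
  have hpω : p ∈ omegaSeq f x := mem_omegaSeq_comp hφ hψ hp
  have h1 : Tendsto (fun n => infDist (f^[φ (ψ n)] x) C) atTop (𝓝 (infDist p C)) :=
    ((continuous_infDist_pt C).tendsto p).comp hp
  have h2 : ε ≤ infDist p C :=
    ge_of_tendsto' h1 (fun n => hφε (ψ n))
  rw [infDist_zero_of_mem (hC hpω)] at h2
  linarith

lemma basin_of_Q [CompactSpace X] (hf : Continuous f) {C : Set X}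
    (hC : IsChainComponent f C) {x : X}
    (hQ : ∀ n N : ℕ, ∃ i, N ≤ i ∧ infDist (f^[i] x) C < 1 / (n + 1)) :
    Tendsto (fun i => infDist (f^[i] x) C) atTop (𝓝 0) := by
  obtain ⟨x0, hx0, hCeq⟩ := hC
  have hx0C : x0 ∈ C := by rw [hCeq]; exact ⟨hx0, hx0, hx0⟩
  have hfreq : ∀ n : ℕ, ∃ᶠ i in atTop, infDist (f^[i] x) C < 1 / (n + 1) := by
    intro n
    rw [frequently_atTop]
    intro N
    obtain ⟨i, hi, h⟩ := hQ n N
    exact ⟨i, hi, h⟩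
  obtain ⟨φ, hφ, hP⟩ := Filter.extraction_forall_of_frequently hfreq
  obtain ⟨p, -, ψ, hψ, hp⟩ := isCompact_univ.tendsto_subseq
    (fun n => mem_univ (f^[φ n] x))
  have hpω : p ∈ omegaSeq f x := mem_omegaSeq_comp hφ hψ hp
  have hpd : infDist p C = 0 := by
    have h1 : Tendsto (fun n => infDist (f^[φ (ψ n)] x) C) atTop (𝓝 (infDist p C)) :=
      ((continuous_infDist_pt C).tendsto p).comp hp
    have h3 : Tendsto (fun n : ℕ => 1 / ((ψ n : ℝ) + 1)) atTop (𝓝 0) :=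
      tendsto_one_div_add_atTop_nhds_zero_nat.comp hψ.tendsto_atTop
    have h4 : infDist p C ≤ 0 :=
      le_of_tendsto_of_tendsto' h1 h3 (fun n => (hP (ψ n)).le)
    exact le_antisymm h4 infDist_nonneg
  have hpcl : p ∈ closure C := (Metric.mem_closure_iff_infDist_zero ⟨x0, hx0C⟩).2 hpd
  obtain ⟨y, hyC, hyp⟩ := mem_closure_iff_seq_limit.1 hpcl
  have hyrel : ∀ n, ChainRel f x0 (y n) := by
    intro n
    have h := hyC n
    rw [hCeq] at h
    exact h.2
  have hx0p : ChainTo f x0 p := chainTo_tendsto_right hyp (fun n => (hyrel n).1)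
  have hpx0 : ChainTo f p x0 := chainTo_tendsto_left hf hyp (fun n => (hyrel n).2)
  have hsub : omegaSeq f x ⊆ C := by
    intro w hw
    have hpw : ChainTo f p w := omegaSeq_chainTo hf hpω hw
    have hwp : ChainTo f w p := omegaSeq_chainTo hf hw hpω
    rw [hCeq]
    exact ⟨chainTo_trans hwp hpw, chainTo_trans hx0p hpw, chainTo_trans hwp hpx0⟩
  exact tendsto_infDist_of_omega_subset hsub

end Aux

/-- The basin of a chain component is a Gδ set, and membership is characterized
by the liminf of distances being zero. -/
theorem stmt4 {X : Type*} [MetricSpace X] [CompactSpace X]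
    (f : X → X) (hf : Continuous f) (C : Set X) (hC : IsChainComponent f C) :
    IsGδ (basin f C) ∧
    (∀ x : X, x ∈ basin f C ↔
      Filter.liminf (fun i => infDist (f^[i] x) C) atTop = 0) := by
  have key : ∀ x : X, x ∈ basin f C ↔
      (∀ n N : ℕ, ∃ i, N ≤ i ∧ infDist (f^[i] x) C < 1 / (n + 1)) := by
    intro x
    constructor
    · intro hx n N
      have hpos : (0 : ℝ) < 1 / (n + 1) := by positivity
      have h1 : ∀ᶠ i in atTop, infDist (f^[i] x) C < 1 / (n + 1) :=
        hx (Iio_mem_nhds hpos)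
      obtain ⟨i, hi1, hi2⟩ := (h1.and (eventually_ge_atTop N)).exists
      exact ⟨i, hi2, hi1⟩
    · intro h
      exact basin_of_Q hf hC h
  constructor
  · have hbasin : basin f C = ⋂ (n : ℕ), ⋂ (N : ℕ), ⋃ (i : ℕ),
        {x : X | N ≤ i ∧ infDist (f^[i] x) C < 1 / (n + 1)} := by
      ext x
      simp only [mem_iInter, mem_iUnion, mem_setOf_eq]
      exact key x
    rw [hbasin]
    refine IsGδ.iInter fun n => IsGδ.iInter fun N => IsOpen.isGδ ?_
    refine isOpen_iUnion fun i => ?_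
    by_cases h : N ≤ i
    · simp only [h, true_and]
      exact isOpen_lt ((continuous_infDist_pt C).comp (hf.iterate i)) continuous_const
    · simp only [h, false_and, setOf_false]
      exact isOpen_empty
  · intro x
    constructor
    · intro hx
      exact Filter.Tendsto.liminf_eq hx
    · intro h
      refine (key x).2 fun n N => ?_
      have hcb : IsCoboundedUnder (· ≥ ·) atTop (fun i => infDist (f^[i] x) C) := by
        obtain ⟨x0, hx0, hCeq⟩ := hC
        have hx0C : x0 ∈ C := by rw [hCeq]; exact ⟨hx0, hx0, hx0⟩
        obtain ⟨R, hR⟩ := Metric.isBounded_iff.1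
          (isCompact_univ : IsCompact (Set.univ : Set X)).isBounded
        refine Filter.isCoboundedUnder_ge_of_le atTop (x := R) fun i => ?_
        exact le_trans (infDist_le_dist_of_mem hx0C) (hR (mem_univ _) (mem_univ _))
      have hlt : liminf (fun i => infDist (f^[i] x) C) atTop < 1 / (n + 1) := by
        rw [h]; positivity
      have hfr := Filter.frequently_lt_of_liminf_lt hcb hlt
      obtain ⟨i, hi, h'⟩ := frequently_atTop.1 hfr N
      exact ⟨i, hi, h'⟩
end

section
/- Let X be a compact metric space and f : X → X continuous. The space X is the disjoint union of the basins W^s(C) over all chain components C of f: every point x ∈ X lies in W^s(C) for exactly one chain component C. -/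
open Filter Topology Metric Set

variable {X : Type*} [MetricSpace X]

lemma ChainReach.trans {f : X → X} {δ : ℝ} {x y z : X}
    (h1 : ChainReach f δ x y) (h2 : ChainReach f δ y z) : ChainReach f δ x z := by
  obtain ⟨k, hk, c, hc0, hck, hc⟩ := h1
  obtain ⟨l, hl, d, hd0, hdl, hd⟩ := h2
  refine ⟨k + l, by omega, fun i => if i ≤ k then c i else d (i - k), by simp [hc0], ?_, ?_⟩
  · simp only
    rw [if_neg (by omega)]
    simpa using hdl
  · intro i hi
    by_cases h : i < k
    · simp only
      rw [if_pos h.le, if_pos (by omega)]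
      exact hc i h
    · by_cases h0 : i = k
      · subst h0
        simp only
        rw [if_pos le_rfl, if_neg (by omega), hck, ← hd0]
        have := hd 0 hl
        simpa using this
      · simp only
        rw [if_neg (by omega), if_neg (by omega)]
        have hlt : i - k < l := by omega
        have := hd (i - k) hlt
        have he : i + 1 - k = (i - k) + 1 := by omega
        rw [he]
        exact this

lemma ChainTo.trans' {f : X → X} {x y z : X}
    (h1 : ChainTo f x y) (h2 : ChainTo f y z) : ChainTo f x z :=
  fun δ hδ => (h1 δ hδ).trans (h2 δ hδ)

/-- The omega limit set. -/
def omegaSet (f : X → X) (x : X) : Set X :=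
  {p | ∀ ε > 0, ∀ N : ℕ, ∃ n ≥ N, dist (f^[n] x) p < ε}

lemma omega_nonempty [CompactSpace X] (f : X → X) (x : X) : (omegaSet f x).Nonempty := by
  obtain ⟨p, -, φ, hφ, hlim⟩ := isCompact_univ.tendsto_subseq
    (fun n => (mem_univ (f^[n] x)))
  refine ⟨p, fun ε hε N => ?_⟩
  obtain ⟨M, hM⟩ := Metric.tendsto_atTop.mp hlim ε hε
  exact ⟨φ (max M N), le_trans (le_max_right M N) (hφ.id_le _),
    hM (max M N) (le_max_left M N)⟩

lemma tendsto_infDist_omega [CompactSpace X] (f : X → X) (x : X) :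
    Tendsto (fun i => infDist (f^[i] x) (omegaSet f x)) atTop (𝓝 0) := by
  by_contra hcon
  rw [Metric.tendsto_atTop] at hcon
  push_neg at hcon
  obtain ⟨ε, hε, hfreq⟩ := hcon
  have hfreq' : ∀ N : ℕ, ∃ n ≥ N, ε ≤ infDist (f^[n] x) (omegaSet f x) := by
    intro N
    obtain ⟨n, hn, h⟩ := hfreq N
    refine ⟨n, hn, ?_⟩
    rw [Real.dist_eq, sub_zero, abs_of_nonneg infDist_nonneg] at h
    exact h
  choose sel hsel1 hsel2 using hfreq'
  let g : ℕ → ℕ := fun n => Nat.rec (sel 0) (fun _ prev => sel (prev + 1)) n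
  have hg0 : ∀ n, g (n + 1) = sel (g n + 1) := fun n => rfl
  have hgmono : ∀ n, g n + 1 ≤ g (n + 1) := by
    intro n; rw [hg0]; exact hsel1 _
  have hgid : ∀ n, n ≤ g n := by
    intro n
    induction n with
    | zero => exact Nat.zero_le _
    | succ m ih => have := hgmono m; omega
  have hginf : ∀ n, ε ≤ infDist (f^[g n] x) (omegaSet f x) := by
    intro n
    cases n with
    | zero => exact hsel2 0
    | succ m => rw [hg0]; exact hsel2 _
  obtain ⟨p, -, ψ, hψ, hlim⟩ := isCompact_univ.tendsto_subseq
    (fun n => (mem_univ (f^[g n] x)))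
  have hp : p ∈ omegaSet f x := by
    intro ε' hε' N
    obtain ⟨M, hM⟩ := Metric.tendsto_atTop.mp hlim ε' hε'
    refine ⟨g (ψ (max M N)), ?_, hM (max M N) (le_max_left M N)⟩
    calc N ≤ max M N := le_max_right M N
    _ ≤ ψ (max M N) := hψ.id_le _
    _ ≤ g (ψ (max M N)) := hgid _
  obtain ⟨M, hM⟩ := Metric.tendsto_atTop.mp hlim ε hε
  have h1 : infDist (f^[g (ψ M)] x) (omegaSet f x) ≤ dist (f^[g (ψ M)] x) p :=
    infDist_le_dist_of_mem hp
  have h2 := hM M le_rfl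
  have h3 := hginf (ψ M)
  simp only [Function.comp_apply] at h2
  linarith

/-- Chain transitivity of the omega limit set. -/
lemma omega_chainReach [CompactSpace X] {f : X → X} (hf : Continuous f) {x p q : X}
    (hp : p ∈ omegaSet f x) (hq : q ∈ omegaSet f x) {δ : ℝ} (hδ : 0 < δ) :
    ChainReach f δ p q := by
  obtain ⟨ε, hε, hue⟩ := Metric.uniformContinuous_iff.mp
    (CompactSpace.uniformContinuous_of_continuous hf) δ hδ
  obtain ⟨n, hn1, hpn⟩ := hp ε hε 1
  obtain ⟨m, hm, hqm⟩ := hq δ hδ (n + 2)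
  set c : ℕ → X := fun i => if i = 0 then p else if i < m - n then f^[n + i] x else q with hcdef
  have hv0 : c 0 = p := by simp [hcdef]
  have hvmid : ∀ i, i ≠ 0 → i < m - n → c i = f^[n + i] x := by
    intro i h1 h2; simp [hcdef, h1, h2]
  have hvend : ∀ i, i ≠ 0 → ¬ i < m - n → c i = q := by
    intro i h1 h2; simp [hcdef, h1, h2]
  refine ⟨m - n, by omega, c, hv0, hvend _ (by omega) (by omega), ?_⟩
  intro i hi
  by_cases h0 : i = 0
  · subst h0
    rw [hv0, hvmid 1 one_ne_zero (by omega)]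
    have : dist (f p) (f (f^[n] x)) < δ := hue (by rw [dist_comm]; exact hpn)
    rw [← Function.iterate_succ_apply' f n x] at this
    simpa using le_of_lt this
  · rw [hvmid i h0 hi, ← Function.iterate_succ_apply' f (n + i) x]
    by_cases h1 : i + 1 < m - n
    · rw [hvmid (i+1) (by omega) h1]
      have he : (n + i).succ = n + (i + 1) := by omega
      rw [he]
      simp [hδ.le]
    · rw [hvend (i+1) (by omega) h1]
      have he : (n + i).succ = m := by omega
      rw [he]
      exact le_of_lt hqm

lemma chainTo_of_tendsto_right {f : X → X} {z y : X} {u : ℕ → X}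
    (hu : Tendsto u atTop (𝓝 y)) (h : ∀ n, ChainTo f z (u n)) : ChainTo f z y := by
  intro δ hδ
  obtain ⟨N, hN⟩ := Metric.tendsto_atTop.mp hu (δ / 2) (by linarith)
  obtain ⟨k, hk, c, hc0, hck, hc⟩ := h N (δ / 2) (by linarith)
  set d : ℕ → X := fun i => if i = k then y else c i with hddef
  have hvk : d k = y := by simp [hddef]
  have hvne : ∀ i, i ≠ k → d i = c i := by intro i h1; simp [hddef, h1]
  refine ⟨k, hk, d, by rw [hvne 0 (by omega)]; exact hc0, hvk, ?_⟩
  intro i hi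
  rw [hvne i (by omega)]
  by_cases h1 : i + 1 = k
  · rw [h1, hvk]
    calc dist (f (c i)) y ≤ dist (f (c i)) (c (i + 1)) + dist (c (i + 1)) y :=
          dist_triangle _ _ _
    _ ≤ δ / 2 + δ / 2 := by
        refine add_le_add (hc i hi) ?_
        rw [h1, hck]
        exact le_of_lt (hN N le_rfl)
    _ = δ := by ring
  · rw [hvne (i+1) h1]
    exact le_trans (hc i hi) (by linarith)

lemma chainTo_of_tendsto_left {f : X → X} (hf : Continuous f) {z y : X} {u : ℕ → X}
    (hu : Tendsto u atTop (𝓝 y)) (h : ∀ n, ChainTo f (u n) z) : ChainTo f y z := by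
  intro δ hδ
  obtain ⟨η, hη, hcont⟩ := Metric.continuous_iff.mp hf y (δ / 2) (by linarith)
  obtain ⟨N, hN⟩ := Metric.tendsto_atTop.mp hu η hη
  obtain ⟨k, hk, c, hc0, hck, hc⟩ := h N (δ / 2) (by linarith)
  set d : ℕ → X := fun i => if i = 0 then y else c i with hddef
  have hv0 : d 0 = y := by simp [hddef]
  have hvne : ∀ i, i ≠ 0 → d i = c i := by intro i h1; simp [hddef, h1]
  refine ⟨k, hk, d, hv0, by rw [hvne k (by omega)]; exact hck, ?_⟩
  intro i hi
  by_cases h0 : i = 0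
  · subst h0
    rw [hv0, hvne 1 one_ne_zero]
    calc dist (f y) (c 1) ≤ dist (f y) (f (c 0)) + dist (f (c 0)) (c 1) :=
          dist_triangle _ _ _
    _ ≤ δ / 2 + δ / 2 := by
        refine add_le_add ?_ (hc 0 hk)
        rw [dist_comm, hc0]
        exact le_of_lt (hcont (u N) (hN N le_rfl))
    _ = δ := by ring
  · rw [hvne i h0, hvne (i+1) (by omega)]
    exact le_trans (hc i hi) (by linarith)


/-- Every point of `X` lies in the basin of exactly one chain component. -/
theorem stmt5 {X : Type*} [MetricSpace X] [CompactSpace X]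
    (f : X → X) (hf : Continuous f) :
    ∀ x : X, ∃! C : Set X, IsChainComponent f C ∧ x ∈ basin f C := by
  intro x
  obtain ⟨p, hp⟩ := omega_nonempty f x
  have hpCR : p ∈ CR f := fun δ hδ => omega_chainReach hf hp hp hδ
  have hωC : omegaSet f x ⊆ {y | y ∈ CR f ∧ ChainRel f p y} := by
    intro q hq
    exact ⟨fun δ hδ => omega_chainReach hf hq hq hδ,
      fun δ hδ => omega_chainReach hf hp hq hδ,
      fun δ hδ => omega_chainReach hf hq hp hδ⟩
  have hxC : x ∈ basin f {y | y ∈ CR f ∧ ChainRel f p y} := by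
    refine squeeze_zero (fun n => infDist_nonneg) (fun n => ?_) (tendsto_infDist_omega f x)
    exact infDist_le_infDist_of_subset hωC ⟨p, hp⟩
  refine ⟨{y | y ∈ CR f ∧ ChainRel f p y}, ⟨⟨p, hpCR, rfl⟩, hxC⟩, ?_⟩
  rintro C' ⟨⟨b, hb, rfl⟩, hxC'⟩
  have hbC' : b ∈ {y | y ∈ CR f ∧ ChainRel f b y} := ⟨hb, hb, hb⟩
  -- p lies in the closure of C'
  have hinf : infDist p {y | y ∈ CR f ∧ ChainRel f b y} = 0 := by
    refine le_antisymm ?_ infDist_nonneg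
    have : ∀ ε > (0:ℝ), infDist p {y | y ∈ CR f ∧ ChainRel f b y} ≤ 0 + ε := by
      intro ε hε
      obtain ⟨N, hN⟩ := Metric.tendsto_atTop.mp hxC' (ε / 2) (by linarith)
      obtain ⟨n, hn, hdn⟩ := hp (ε / 2) (by linarith) N
      have h1 := hN n hn
      rw [Real.dist_eq, sub_zero, abs_of_nonneg infDist_nonneg] at h1
      calc infDist p {y | y ∈ CR f ∧ ChainRel f b y}
          ≤ infDist (f^[n] x) {y | y ∈ CR f ∧ ChainRel f b y} + dist p (f^[n] x) :=
            infDist_le_infDist_add_dist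
        _ ≤ ε / 2 + ε / 2 := add_le_add h1.le (by rw [dist_comm]; exact hdn.le)
        _ = 0 + ε := by ring
    exact le_of_forall_pos_le_add this
  have hpcl : p ∈ closure {y | y ∈ CR f ∧ ChainRel f b y} :=
    (Metric.mem_closure_iff_infDist_zero ⟨b, hbC'⟩).mpr hinf
  obtain ⟨u, hu1, hu2⟩ := mem_closure_iff_seq_limit.mp hpcl
  have hbp : ChainTo f b p := chainTo_of_tendsto_right hu2 (fun n => (hu1 n).2.1)
  have hpb : ChainTo f p b := chainTo_of_tendsto_left hf hu2 (fun n => (hu1 n).2.2)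
  ext y
  constructor
  · rintro ⟨hyCR, hby, hyb⟩
    exact ⟨hyCR, hpb.trans' hby, hyb.trans' hbp⟩
  · rintro ⟨hyCR, hpy, hyp⟩
    exact ⟨hyCR, hbp.trans' hpy, hyp.trans' hpb⟩
end

section
/- Let C be a chain component of a continuous map f : X → X on a compact metric space, δ > 0, g = f|_C, and m the gcd of the lengths of all δ-cycles of g. Define x ∼_{C,δ} y iff there is a δ-chain of g from x to y whose length is divisible by m. Then ∼_{C,δ} is an open and closed (g×g)-invariant equivalence relation on C, and any x, y ∈ C with d(x,y) ≤ δ satisfy x ∼_{C,δ} y. -/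
open Filter Topology Metric Set

variable {X : Type*} [MetricSpace X]

/-- The set of lengths of `δ`-cycles of `f` restricted to `C`. -/
def cycLengths (f : X → X) (C : Set X) (δ : ℝ) : Set ℕ :=
  {k | ∃ x ∈ C, ChainInLen f C δ x x k}

section Aux

variable {X : Type*} [MetricSpace X] {f : X → X} {S T : Set X} {δ δ' ε θ : ℝ} {x y z : X}

lemma cil_mono (hST : S ⊆ T) {k : ℕ} (h : ChainInLen f S δ x y k) : ChainInLen f T δ x y k := by
  obtain ⟨hk, c, hS, h0, hk', hstep⟩ := h
  exact ⟨hk, c, fun i hi => hST (hS i hi), h0, hk', hstep⟩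

lemma cil_mono_dist (hδ : δ ≤ δ') {k : ℕ} (h : ChainInLen f S δ x y k) :
    ChainInLen f S δ' x y k := by
  obtain ⟨hk, c, hS, h0, hk', hstep⟩ := h
  exact ⟨hk, c, hS, h0, hk', fun i hi => (hstep i hi).trans hδ⟩

lemma cil_concat {k l : ℕ} (h1 : ChainInLen f S δ x y k) (h2 : ChainInLen f S δ y z l) :
    ChainInLen f S δ x z (k + l) := by
  obtain ⟨hk, c, hcS, hc0, hck, hcstep⟩ := h1
  obtain ⟨hl, d, hdS, hd0, hdl, hdstep⟩ := h2
  refine ⟨by omega, fun j => if j ≤ k then c j else d (j - k), ?_, ?_, ?_, ?_⟩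
  · intro i hi
    by_cases h : i ≤ k
    · simpa [h] using hcS i h
    · simp only [h, if_false]
      exact hdS _ (by omega)
  · simpa using hc0
  · have h : ¬ (k + l ≤ k) := by omega
    simp only [h, if_false]
    simpa using hdl
  · intro j hj
    by_cases h1' : j + 1 ≤ k
    · have h2' : j ≤ k := by omega
      simp only [h1', h2', if_true]
      exact hcstep j (by omega)
    · by_cases h2' : j ≤ k
      · have hjk : j = k := by omega
        simp only [h1', h2', if_true, if_false]
        subst hjk
        rw [hck, ← hd0]
        have : j + 1 - j = 1 := by omega
        rw [this]
        exact hdstep 0 (by omega)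
      · simp only [h1', h2', if_false]
        have : j + 1 - k = (j - k) + 1 := by omega
        rw [this]
        exact hdstep (j - k) (by omega)

lemma cil_single (hx : x ∈ S) (hy : y ∈ S) (h : dist (f x) y ≤ δ) : ChainInLen f S δ x y 1 := by
  refine ⟨one_pos, fun j => if j = 0 then x else y, ?_, by simp, by simp, ?_⟩
  · intro i hi
    by_cases h0 : i = 0 <;> simp [h0, hx, hy]
  · intro i hi
    have h0 : i = 0 := by omega
    subst h0
    simpa using h

lemma cil_adjust_last {k : ℕ} (h : ChainInLen f S δ x y k) (hz : z ∈ S) (hyz : dist y z ≤ ε)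
    (hδ' : δ + ε ≤ δ') : ChainInLen f S δ' x z k := by
  obtain ⟨hk, c, hS, h0, hk', hstep⟩ := h
  refine ⟨hk, fun j => if j = k then z else c j, ?_, ?_, by simp, ?_⟩
  · intro i hi
    by_cases hik : i = k
    · simp [hik, hz]
    · simp only [hik, if_false]; exact hS i hi
  · have : (0 : ℕ) ≠ k := by omega
    simp [this, h0]
  · intro i hi
    have hik : i ≠ k := by omega
    simp only [hik, if_false]
    by_cases hik1 : i + 1 = k
    · simp only [hik1, if_true]
      have h5 := hstep i hi
      rw [hik1, hk'] at h5
      calc dist (f (c i)) z ≤ dist (f (c i)) y + dist y z := dist_triangle _ _ _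
        _ ≤ δ + ε := add_le_add h5 hyz
        _ ≤ δ' := hδ'
    · simp only [hik1, if_false]
      exact (hstep i hi).trans (by linarith [dist_nonneg (x := y) (y := z)])

lemma cil_adjust_first {k : ℕ} (hmod : ∀ a b : X, dist a b ≤ θ → dist (f a) (f b) ≤ ε)
    (h : ChainInLen f S δ x y k) (hz : z ∈ S) (hxz : dist x z ≤ θ)
    (hδ' : δ + ε ≤ δ') : ChainInLen f S δ' z y k := by
  obtain ⟨hk, c, hS, h0, hk', hstep⟩ := h
  refine ⟨hk, fun j => if j = 0 then z else c j, ?_, by simp, ?_, ?_⟩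
  · intro i hi
    by_cases h0' : i = 0
    · simp [h0', hz]
    · simp only [h0', if_false]; exact hS i hi
  · have : k ≠ 0 := by omega
    simp [this, hk']
  · intro i hi
    have hi1 : i + 1 ≠ 0 := by omega
    simp only [hi1, if_false]
    by_cases h0' : i = 0
    · simp only [h0', if_true]
      calc dist (f z) (c (0+1)) ≤ dist (f z) (f x) + dist (f x) (c (0+1)) := dist_triangle _ _ _
        _ ≤ ε + δ := by
            refine add_le_add (hmod _ _ (by rwa [dist_comm])) ?_
            rw [← h0]
            exact hstep 0 (by omega)
        _ ≤ δ' := by linarith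
    · simp only [h0', if_false]
      exact (hstep i hi).trans (by
        have := dist_nonneg (x := x) (y := z)
        have h2 : (0:ℝ) ≤ ε := le_trans dist_nonneg (hmod x x (by simpa using le_trans dist_nonneg hxz))
        linarith)

lemma cil_shift {k : ℕ} (hmod : ∀ a b : X, dist a b ≤ δ → dist (f a) (f b) ≤ ε)
    (h : ChainInLen f S δ x y k) (hk2 : 2 ≤ k) (hfx : f x ∈ S)
    (hδ' : δ + ε ≤ δ') (hδδ' : δ ≤ δ') : ChainInLen f S δ' (f x) y (k - 1) := by
  obtain ⟨hk, c, hS, h0, hk', hstep⟩ := h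
  refine ⟨by omega, fun j => if j = 0 then f x else c (j + 1), ?_, by simp, ?_, ?_⟩
  · intro i hi
    by_cases h0' : i = 0
    · simp [h0', hfx]
    · simp only [h0', if_false]; exact hS _ (by omega)
  · have h1 : k - 1 ≠ 0 := by omega
    have h2 : k - 1 + 1 = k := by omega
    simp [h1, h2, hk']
  · intro i hi
    have hi1 : i + 1 ≠ 0 := by omega
    simp only [hi1, if_false]
    by_cases h0' : i = 0
    · simp only [h0', if_true]
      calc dist (f (f x)) (c (0+1+1)) ≤ dist (f (f x)) (f (c 1)) + dist (f (c 1)) (c 2) :=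
            dist_triangle _ _ _
        _ ≤ ε + δ := by
            refine add_le_add (hmod _ _ ?_) (hstep 1 (by omega))
            simpa [h0] using hstep 0 (by omega)
        _ ≤ δ' := by linarith
    · simp only [h0', if_false]
      exact (hstep (i + 1) (by omega)).trans hδδ'

lemma chainReach_iff : ChainReach f δ x y ↔ ∃ k, ChainInLen f Set.univ δ x y k := by
  constructor
  · rintro ⟨k, hk, c, h0, hk', hstep⟩
    exact ⟨k, hk, c, fun _ _ => Set.mem_univ _, h0, hk', hstep⟩
  · rintro ⟨k, hk, c, _, h0, hk', hstep⟩
    exact ⟨k, hk, c, h0, hk', hstep⟩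

lemma chainTo_trans_s6 (h1 : ChainTo f x y) (h2 : ChainTo f y z) : ChainTo f x z := by
  intro ε hε
  obtain ⟨k, hk⟩ := chainReach_iff.1 (h1 ε hε)
  obtain ⟨l, hl⟩ := chainReach_iff.1 (h2 ε hε)
  exact chainReach_iff.2 ⟨k + l, cil_concat hk hl⟩

lemma dist_mod [CompactSpace X] (hf : Continuous f) :
    ∀ ε > 0, ∃ θ > 0, ∀ a b : X, dist a b ≤ θ → dist (f a) (f b) ≤ ε := by
  have huc := Metric.uniformContinuous_iff.1 (CompactSpace.uniformContinuous_of_continuous hf)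
  intro ε hε
  obtain ⟨θ, hθ, h⟩ := huc ε hε
  exact ⟨θ / 2, by linarith, fun a b hab => (h (lt_of_le_of_lt hab (by linarith))).le⟩

lemma chainTo_limit_right {w : ℕ → X} (hw : ∀ n, ChainTo f x (w n))
    (hlim : Filter.Tendsto w Filter.atTop (nhds z)) : ChainTo f x z := by
  intro ε hε
  obtain ⟨N, hN⟩ := Metric.tendsto_atTop.1 hlim (ε / 2) (by linarith)
  obtain ⟨k, hk⟩ := chainReach_iff.1 (hw N (ε / 2) (by linarith))
  exact chainReach_iff.2 ⟨k, cil_adjust_last hk (Set.mem_univ z)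
    (le_of_lt (hN N le_rfl)) (by linarith)⟩

lemma chainTo_limit_left [CompactSpace X] (hf : Continuous f) {w : ℕ → X} {y : X}
    (hw : ∀ n, ChainTo f (w n) y)
    (hlim : Filter.Tendsto w Filter.atTop (nhds z)) : ChainTo f z y := by
  intro ε hε
  obtain ⟨θ, hθ, hmod⟩ := dist_mod hf (ε / 2) (by linarith)
  obtain ⟨N, hN⟩ := Metric.tendsto_atTop.1 hlim θ hθ
  obtain ⟨k, hk⟩ := chainReach_iff.1 (hw N (ε / 2) (by linarith))
  exact chainReach_iff.2 ⟨k, cil_adjust_first hmod hk (Set.mem_univ z)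
    (le_of_lt (hN N le_rfl)) (by linarith)⟩

end Aux
section Key

variable {X : Type*} [MetricSpace X] {f : X → X} {C : Set X}

lemma key_chain [CompactSpace X] (hf : Continuous f) {x y : X}
    (hxy : ChainTo f x y) (hyx : ChainTo f y x) {δ : ℝ} (hδ : 0 < δ) :
    ∃ k, ChainInLen f {z | ChainTo f x z ∧ ChainTo f z y} δ x y k := by
  classical
  set D := {z | ChainTo f x z ∧ ChainTo f z y} with hD
  have hxD : x ∈ D := ⟨chainTo_trans_s6 hxy hyx, hxy⟩
  have hyD : y ∈ D := ⟨hxy, chainTo_trans_s6 hyx hxy⟩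
  obtain ⟨θ0, hθ0, hmod0⟩ := dist_mod hf (δ / 3) (by linarith)
  set θ := min θ0 (δ / 3) with hθdef
  have hθpos : 0 < θ := lt_min hθ0 (by linarith)
  have hθle : θ ≤ δ / 3 := min_le_right _ _
  have hmodθ : ∀ a b : X, dist a b ≤ θ → dist (f a) (f b) ≤ δ / 3 :=
    fun a b h => hmod0 a b (h.trans (min_le_left _ _))
  -- Step B: find ε such that all ε-reachable "between" points are θ-close to D
  have hB : ∃ ε > 0, ε ≤ δ / 3 ∧ ∀ z, ChainReach f ε x z → ChainReach f ε z y →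
      ∃ w ∈ D, dist z w ≤ θ := by
    by_contra hcon
    push_neg at hcon
    have hsel : ∀ n : ℕ, ∃ z, ChainReach f (min (δ/3) (1/(n+1))) x z ∧
        ChainReach f (min (δ/3) (1/(n+1))) z y ∧ ∀ w ∈ D, θ < dist z w := by
      intro n
      have hpos : 0 < min (δ/3) (1/((n:ℝ)+1)) := lt_min (by linarith) (by positivity)
      obtain ⟨z, hz1, hz2, hz3⟩ := hcon _ hpos (min_le_left _ _)
      exact ⟨z, hz1, hz2, hz3⟩
    choose z hz1 hz2 hz3 using hsel
    obtain ⟨L, -, φ, hφ, hconv⟩ := isCompact_univ.tendsto_subseq (x := z)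
      (fun n => Set.mem_univ (z n))
    have hεsmall : ∀ s > (0:ℝ), ∃ n, min (δ/3) (1/((φ n : ℝ)+1)) ≤ s ∧
        dist (z (φ n)) L ≤ s := by
      intro s hs
      obtain ⟨N1, hN1⟩ := Metric.tendsto_atTop.1 hconv s hs
      obtain ⟨N2, hN2⟩ := exists_nat_one_div_lt (ε := s) hs
      refine ⟨max N1 N2, ?_, le_of_lt (hN1 _ (le_max_left _ _))⟩
      have h1 : (N2 : ℝ) + 1 ≤ (φ (max N1 N2) : ℝ) + 1 := by
        have : N2 ≤ φ (max N1 N2) := le_trans (le_max_right _ _) (hφ.le_apply)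
        exact_mod_cast by omega
      calc min (δ/3) (1/((φ (max N1 N2) : ℝ)+1)) ≤ 1/((φ (max N1 N2) : ℝ)+1) :=
            min_le_right _ _
        _ ≤ 1/((N2:ℝ)+1) := by
            apply one_div_le_one_div_of_le (by positivity) h1
        _ ≤ s := hN2.le
    have hLD : L ∈ D := by
      constructor
      · intro ε hε
        obtain ⟨n, hn1, hn2⟩ := hεsmall (ε/2) (by linarith)
        obtain ⟨k, hk⟩ := chainReach_iff.1 (hz1 (φ n))
        exact chainReach_iff.2 ⟨k, cil_adjust_last (cil_mono_dist hn1 hk)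
          (Set.mem_univ L) hn2 (by linarith)⟩
      · intro ε hε
        obtain ⟨θ1, hθ1, hmod1⟩ := dist_mod hf (ε/2) (by linarith)
        obtain ⟨n, hn1, hn2⟩ := hεsmall (min (ε/2) θ1) (lt_min (by linarith) hθ1)
        obtain ⟨k, hk⟩ := chainReach_iff.1 (hz2 (φ n))
        exact chainReach_iff.2 ⟨k, cil_adjust_first hmod1
          (cil_mono_dist (hn1.trans (min_le_left _ _)) hk) (Set.mem_univ L)
          (hn2.trans (min_le_right _ _)) (by linarith)⟩
    obtain ⟨n, -, hn2⟩ := hεsmall (θ/2) (by linarith)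
    have := hz3 (φ n) L hLD
    linarith
  obtain ⟨ε, hεpos, hεle, hεprop⟩ := hB
  obtain ⟨k, hk, c, hc0, hck, hstep⟩ := hxy ε hεpos
  have hP : ∀ i, ∃ w, (0 < i ∧ i < k) → (w ∈ D ∧ dist (c i) w ≤ θ) := by
    intro i
    by_cases h : 0 < i ∧ i < k
    · have h1 : ChainReach f ε x (c i) := ⟨i, h.1, c, hc0, rfl, fun j hj => hstep j (by omega)⟩
      have h2 : ChainReach f ε (c i) y := by
        refine ⟨k - i, by omega, fun j => c (i + j), by simp, ?_, ?_⟩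
        · show c (i + (k - i)) = y
          rw [show i + (k - i) = k by omega, hck]
        · intro j hj
          show dist (f (c (i + j))) (c (i + (j + 1))) ≤ ε
          rw [show i + (j + 1) = (i + j) + 1 by omega]
          exact hstep (i + j) (by omega)
      obtain ⟨w, hw1, hw2⟩ := hεprop (c i) h1 h2
      exact ⟨w, fun _ => ⟨hw1, hw2⟩⟩
    · exact ⟨x, fun hh => absurd hh h⟩
  choose W hW using hP
  refine ⟨k, hk, fun i => if i = 0 then x else if k ≤ i then y else W i, ?_, by simp, ?_, ?_⟩
  · intro i hi
    by_cases h0 : i = 0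
    · simp [h0, hxD]
    · by_cases hki : k ≤ i
      · simp [h0, hki, hyD]
      · simp only [h0, hki, if_false]
        exact (hW i ⟨by omega, by omega⟩).1
  · have h1 : k ≠ 0 := by omega
    simp [h1]
  · have hdist : ∀ i ≤ k, dist (c i) (if i = 0 then x else if k ≤ i then y else W i) ≤ θ := by
      intro i hi
      by_cases h0 : i = 0
      · simp [h0, ← hc0, hθpos.le]
      · by_cases hki : k ≤ i
        · have : i = k := by omega
          simp [h0, hki, this, hck, hθpos.le, hk.ne']
        · simp only [h0, hki, if_false]
          exact (hW i ⟨by omega, by omega⟩).2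
    intro i hi
    calc dist (f (if i = 0 then x else if k ≤ i then y else W i))
          (if i + 1 = 0 then x else if k ≤ i + 1 then y else W (i + 1))
        ≤ dist (f (if i = 0 then x else if k ≤ i then y else W i)) (f (c i)) +
          dist (f (c i)) (c (i + 1)) +
          dist (c (i + 1)) (if i + 1 = 0 then x else if k ≤ i + 1 then y else W (i + 1)) :=
          dist_triangle4 _ _ _ _
      _ ≤ δ/3 + ε + θ := by
          refine add_le_add (add_le_add (hmodθ _ _ ?_) (hstep i hi)) (hdist (i+1) (by omega))
          rw [dist_comm]
          exact hdist i (by omega)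
      _ ≤ δ := by linarith

lemma chainTransOn [CompactSpace X] (hf : Continuous f) (hC : IsChainComponent f C) :
    ChainTransitiveOn f C := by
  obtain ⟨x0, hx0, rfl⟩ := hC
  intro u hu v hv δ hδ
  have huv : ChainTo f u v := chainTo_trans_s6 hu.2.2 hv.2.1
  have hvu : ChainTo f v u := chainTo_trans_s6 hv.2.2 hu.2.1
  obtain ⟨k, hlen⟩ := key_chain hf huv hvu hδ
  refine ⟨k, cil_mono ?_ hlen⟩
  intro w hw
  have h1 : ChainTo f x0 w := chainTo_trans_s6 hu.2.1 hw.1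
  have h2 : ChainTo f w x0 := chainTo_trans_s6 hw.2 hv.2.2
  exact ⟨chainTo_trans_s6 h2 h1, h1, h2⟩

end Key
section Main

variable {X : Type*} [MetricSpace X] {f : X → X} {C : Set X}

lemma chainTo_map_self (x : X) : ChainTo f x (f x) := by
  intro ε hε
  exact ⟨1, one_pos, fun j => if j = 0 then x else f x, by simp, by simp, by
    intro i hi
    have h0 : i = 0 := by omega
    subst h0
    simp [hε.le]⟩

lemma mapsTo_of_component [CompactSpace X] (hf : Continuous f) (hC : IsChainComponent f C) :
    ∀ x ∈ C, f x ∈ C := by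
  obtain ⟨x0, hx0, rfl⟩ := hC
  intro x hx
  have h1 : ChainTo f (f x) x := by
    intro ε hε
    obtain ⟨θ, hθ, hmod⟩ := dist_mod hf (ε / 2) (by linarith)
    set η := min θ (ε / 2) with hη
    have hηpos : 0 < η := lt_min hθ (by linarith)
    obtain ⟨k, hk⟩ := chainReach_iff.1 (hx.1 η hηpos)
    have hdb := cil_concat hk hk
    have hmod' : ∀ a b : X, dist a b ≤ η → dist (f a) (f b) ≤ ε / 2 :=
      fun a b h => hmod a b (h.trans (min_le_left _ _))
    have := cil_shift (δ' := ε) hmod' hdb (by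
        have := hk.1
        omega) (Set.mem_univ (f x))
      (by have : η ≤ ε/2 := min_le_right _ _; linarith)
      (by have : η ≤ ε/2 := min_le_right _ _; linarith)
    exact chainReach_iff.2 ⟨_, this⟩
  have h2 : ChainTo f x0 (f x) := chainTo_trans_s6 hx.2.1 (chainTo_map_self x)
  have h3 : ChainTo f (f x) x0 := chainTo_trans_s6 h1 hx.2.2
  exact ⟨chainTo_trans_s6 h3 h2, h2, h3⟩

lemma exists_preimage [CompactSpace X] (hf : Continuous f) (hC : IsChainComponent f C) :
    ∀ x ∈ C, ∃ w ∈ C, f w = x := by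
  have hCT := chainTransOn hf hC
  intro x hx
  have hsel : ∀ n : ℕ, ∃ w ∈ C, dist (f w) x ≤ 1 / ((n:ℝ) + 1) := by
    intro n
    obtain ⟨k, hk, c, hcS, hc0, hck, hstep⟩ := hCT x hx x hx (1/((n:ℝ)+1)) (by positivity)
    refine ⟨c (k - 1), hcS _ (by omega), ?_⟩
    have := hstep (k - 1) (by omega)
    rwa [show k - 1 + 1 = k by omega, hck] at this
  choose w hwC hwd using hsel
  obtain ⟨L, -, φ, hφ, hconv⟩ := isCompact_univ.tendsto_subseq (x := w)
    (fun n => Set.mem_univ (w n))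
  have hfL : f L = x := by
    have h1 : Filter.Tendsto (fun n => f (w (φ n))) Filter.atTop (nhds (f L)) :=
      ((hf.tendsto L).comp hconv)
    have h2 : Filter.Tendsto (fun n => f (w (φ n))) Filter.atTop (nhds x) := by
      rw [tendsto_iff_dist_tendsto_zero]
      apply squeeze_zero (fun n => dist_nonneg) (fun n => (hwd (φ n)).trans ?_)
      · exact tendsto_one_div_add_atTop_nhds_zero_nat
      · apply one_div_le_one_div_of_le (by positivity)
        have : n ≤ φ n := hφ.le_apply
        exact_mod_cast by omega
    exact tendsto_nhds_unique h1 h2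
  obtain ⟨x0, hx0, hCeq⟩ := hC
  have hwrel : ∀ n, ChainTo f x0 (w (φ n)) ∧ ChainTo f (w (φ n)) x0 := by
    intro n
    have := hwC (φ n)
    rw [hCeq] at this
    exact this.2
  have hL1 : ChainTo f x0 L := chainTo_limit_right (fun n => (hwrel n).1) hconv
  have hL2 : ChainTo f L x0 := chainTo_limit_left hf (fun n => (hwrel n).2) hconv
  refine ⟨L, ?_, hfL⟩
  rw [hCeq]
  exact ⟨chainTo_trans_s6 hL2 hL1, hL1, hL2⟩

end Main
/-- The relation `∼_{C,δ}` is an open, closed, `(g×g)`-invariant equivalence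
relation on the chain component `C`, and points at distance `≤ δ` are equivalent. -/
theorem stmt6 {X : Type*} [MetricSpace X] [CompactSpace X]
    (f : X → X) (hf : Continuous f) (C : Set X) (hC : IsChainComponent f C)
    (δ : ℝ) (hδ : 0 < δ) (m : ℕ)
    (hm1 : ∀ k ∈ cycLengths f C δ, m ∣ k)
    (hm2 : ∀ d : ℕ, (∀ k ∈ cycLengths f C δ, d ∣ k) → d ∣ m)
    (rel : X → X → Prop)
    (hrel : ∀ x y, rel x y ↔ ∃ k, m ∣ k ∧ ChainInLen f C δ x y k) :
    (∀ x ∈ C, rel x x) ∧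
    (∀ x ∈ C, ∀ y ∈ C, rel x y → rel y x) ∧
    (∀ x ∈ C, ∀ y ∈ C, ∀ z ∈ C, rel x y → rel y z → rel x z) ∧
    (∀ x ∈ C, ∀ y ∈ C, rel x y → rel (f x) (f y)) ∧
    IsOpen {p : C × C | rel (p.1 : X) (p.2 : X)} ∧
    IsClosed {p : C × C | rel (p.1 : X) (p.2 : X)} ∧
    (∀ x ∈ C, ∀ y ∈ C, dist x y ≤ δ → rel x y) := by
  have hCT := chainTransOn hf hC
  have hInv := mapsTo_of_component hf hC
  -- basic: any chain from x back to x in C has length divisible by m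
  have hcyc : ∀ x ∈ C, ∀ k : ℕ, ChainInLen f C δ x x k → m ∣ k := by
    intro x hx k hk
    exact hm1 k ⟨x, hx, hk⟩
  have hrefl : ∀ x ∈ C, rel x x := by
    intro x hx
    obtain ⟨k, hk⟩ := hCT x hx x hx δ hδ
    exact (hrel x x).2 ⟨k, hcyc x hx k hk, hk⟩
  have hsymm : ∀ x ∈ C, ∀ y ∈ C, rel x y → rel y x := by
    intro x hx y hy hxy
    obtain ⟨k, hmk, hk⟩ := (hrel x y).1 hxy
    obtain ⟨l, hl⟩ := hCT y hy x hx δ hδ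
    have hdvd : m ∣ k + l := hcyc x hx (k + l) (cil_concat hk hl)
    have hml : m ∣ l := by
      have := Nat.dvd_sub hdvd hmk
      rwa [Nat.add_sub_cancel_left] at this
    exact (hrel y x).2 ⟨l, hml, hl⟩
  have htrans : ∀ x ∈ C, ∀ y ∈ C, ∀ z ∈ C, rel x y → rel y z → rel x z := by
    intro x hx y hy z hz hxy hyz
    obtain ⟨k, hmk, hk⟩ := (hrel x y).1 hxy
    obtain ⟨l, hml, hl⟩ := (hrel y z).1 hyz
    exact (hrel x z).2 ⟨k + l, Dvd.dvd.add hmk hml, cil_concat hk hl⟩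
  have hinv : ∀ x ∈ C, ∀ y ∈ C, rel x y → rel (f x) (f y) := by
    intro x hx y hy hxy
    obtain ⟨k, hmk, hk⟩ := (hrel x y).1 hxy
    have hfx : f x ∈ C := hInv x hx
    have hfy : f y ∈ C := hInv y hy
    obtain ⟨l, hl⟩ := hCT (f x) hfx (f y) hfy δ hδ
    obtain ⟨r, hr⟩ := hCT (f y) hfy x hx δ hδ
    have hstep_x : ChainInLen f C δ x (f x) 1 := cil_single hx hfx (by simp [hδ.le])
    have hstep_y : ChainInLen f C δ y (f y) 1 := cil_single hy hfy (by simp [hδ.le])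
    -- cycle x → f x → f y → x : length 1 + l + r
    have hc1 : m ∣ 1 + l + r := hcyc x hx _ (cil_concat (cil_concat hstep_x hl) hr)
    -- cycle x → y → f y → x : length k + 1 + r
    have hc2 : m ∣ k + 1 + r := hcyc x hx _ (cil_concat (cil_concat hk hstep_y) hr)
    have h1r : m ∣ 1 + r := by
      have := Nat.dvd_sub hc2 hmk
      rwa [show k + 1 + r - k = 1 + r by omega] at this
    have hml : m ∣ l := by
      have := Nat.dvd_sub hc1 h1r
      rwa [show 1 + l + r - (1 + r) = l by omega] at this
    exact (hrel (f x) (f y)).2 ⟨l, hml, hl⟩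
  have hclose : ∀ x ∈ C, ∀ y ∈ C, dist x y ≤ δ → rel x y := by
    intro x hx y hy hd
    obtain ⟨w, hwC, hwx⟩ := exists_preimage hf hC x hx
    obtain ⟨a, ha⟩ := hCT x hx w hwC δ hδ
    have hstep_wx : ChainInLen f C δ w x 1 := cil_single hwC hx (by simp [hwx, hδ.le])
    have hstep_wy : ChainInLen f C δ w y 1 := cil_single hwC hy (by rw [hwx]; exact hd)
    have hma : m ∣ a + 1 := hcyc x hx _ (cil_concat ha hstep_wx)
    exact (hrel x y).2 ⟨a + 1, hma, cil_concat ha hstep_wy⟩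
  refine ⟨hrefl, hsymm, htrans, hinv, ?_, ?_, hclose⟩
  · rw [Metric.isOpen_iff]
    rintro ⟨p1, p2⟩ hp
    refine ⟨δ, hδ, ?_⟩
    rintro ⟨q1, q2⟩ hq
    rw [Metric.mem_ball, Prod.dist_eq] at hq
    have hd1 : dist (q1 : X) (p1 : X) < δ := lt_of_le_of_lt (by rw [← Subtype.dist_eq]; exact le_max_left _ _) hq
    have hd2 : dist (q2 : X) (p2 : X) < δ := lt_of_le_of_lt (by rw [← Subtype.dist_eq]; exact le_max_right _ _) hq
    have h1 : rel (q1 : X) (p1 : X) := hclose _ q1.2 _ p1.2 hd1.le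
    have h2 : rel (p2 : X) (q2 : X) := hclose _ p2.2 _ q2.2 (by rw [dist_comm]; exact hd2.le)
    exact htrans _ q1.2 _ p1.2 _ q2.2 h1 (htrans _ p1.2 _ p2.2 _ q2.2 hp h2)
  · rw [← isOpen_compl_iff, Metric.isOpen_iff]
    rintro ⟨p1, p2⟩ hp
    refine ⟨δ, hδ, ?_⟩
    rintro ⟨q1, q2⟩ hq hq'
    rw [Metric.mem_ball, Prod.dist_eq] at hq
    have hd1 : dist (q1 : X) (p1 : X) < δ := lt_of_le_of_lt (by rw [← Subtype.dist_eq]; exact le_max_left _ _) hq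
    have hd2 : dist (q2 : X) (p2 : X) < δ := lt_of_le_of_lt (by rw [← Subtype.dist_eq]; exact le_max_right _ _) hq
    have h1 : rel (p1 : X) (q1 : X) := hclose _ p1.2 _ q1.2 (by rw [dist_comm]; exact hd1.le)
    have h2 : rel (q2 : X) (p2 : X) := hclose _ q2.2 _ p2.2 hd2.le
    exact hp (htrans _ p1.2 _ q1.2 _ p2.2 h1 (htrans _ q1.2 _ q2.2 _ p2.2 hq' h2))
end
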